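/- arXiv:q-alg/9604017 — 2 statements merged into one kernel-verified Lean document; each statement's English description precedes it below -/
import Mathlib

section
/- Let v = Σ_{r=0}^{p-1} q^{-r²} P^r in G = ℂ[ℤ/p]. Then v is invertible, central, and satisfies the ribbon identity R'R = (v ⊗ v) Δ(v^{-1}), where R' = σ(R) = R. -/
open Finset TensorProduct

noncomputable section

/-- The group algebra `ℂ[ℤ/p]`. -/
abbrev Gp (p : ℕ) := MonoidAlgebra ℂ (Multiplicative (ZMod p))

/-- The canonical generator `g` of `ℂ[ℤ/p]`. -/
noncomputable def gp (p : ℕ) : Gp p :=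
  MonoidAlgebra.of ℂ (Multiplicative (ZMod p)) (Multiplicative.ofAdd 1)

/-- `q = exp(2πi/p)`. -/
noncomputable def qp (p : ℕ) : ℂ := Complex.exp (2 * Real.pi * Complex.I / p)

/-- The projector `P^r = (1/p) ∑_{s<p} q^{-rs} g^s`. -/
noncomputable def Pp (p : ℕ) (r : ℕ) : Gp p :=
  (p : ℂ)⁻¹ • ∑ s ∈ Finset.range p, (qp p ^ (r * s))⁻¹ • gp p ^ s

/-- The `R`-matrix `R = ∑_{r,s} q^{rs} P^r ⊗ P^s ∈ G ⊗ G`. -/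
noncomputable def Rp (p : ℕ) : Gp p ⊗[ℂ] Gp p :=
  ∑ r ∈ Finset.range p, ∑ s ∈ Finset.range p,
    qp p ^ (r * s) • (Pp p r ⊗ₜ[ℂ] Pp p s)

/-- The ribbon element `v = ∑_r q^{-r²} P^r`. -/
noncomputable def vp (p : ℕ) : Gp p :=
  ∑ r ∈ Finset.range p, (qp p ^ (r * r))⁻¹ • Pp p r

/-!
Writing `q^n = ψ(n)` for the standard additive character `ψ` of `ℤ/p`, the projectors satisfy
`P^r g^a = ψ(r a) P^r`, and character orthogonality makes them a complete family of orthogonal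
idempotents with `g^a = ∑ ψ(r a) P^r`. Hence `Δ(P^t) = ∑_{r+s=t} P^r ⊗ P^s`, and `R`, `v ⊗ v`
and `Δ(v⁻¹)` are all diagonal in the idempotents `P^r ⊗ P^s`. The ribbon identity then reduces
to the scalar identity `ψ(2 r s) = ψ(-r²) ψ(-s²) ψ((r + s)²)`.
-/

theorem ZMod.sum_range_natCast {M : Type*} [AddCommMonoid M] (n : ℕ) [NeZero n]
    (f : ZMod n → M) : ∑ s ∈ range n, f s = ∑ x, f x :=
  Finset.sum_nbij' (↑) ZMod.val (by simp) (by simp [ZMod.val_lt])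
    (fun s hs ↦ ZMod.val_cast_of_lt (mem_range.1 hs)) (fun x _ ↦ ZMod.natCast_zmod_val x)
    (by simp)

theorem AddChar.IsPrimitive.sum_apply_mul_eq_ite {A k : Type*} [CommRing A] [Fintype A]
    [DecidableEq A] [Field k] {ψ : AddChar A k} (hψ : ψ.IsPrimitive) (b : A) :
    ∑ a, ψ (a * b) = if b = 0 then (Fintype.card A : k) else 0 := by
  simpa [apply_ite] using AddChar.sum_mulShift b hψ

section OrthogonalIdempotents

variable {k B C I J : Type*} [CommSemiring k] [Semiring B] [Algebra k B] [Semiring C]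
  [Algebra k C]

theorem OrthogonalIdempotents.sum_smul_mul_sum_smul [Fintype I] {e : I → B}
    (he : OrthogonalIdempotents e) (f g : I → k) :
    (∑ i, f i • e i) * (∑ i, g i • e i) = ∑ i, (f i * g i) • e i := by
  classical
  simp_rw [Finset.sum_mul_sum, smul_mul_smul_comm, he.mul_eq, smul_ite, smul_zero,
    Finset.sum_ite_eq, Finset.mem_univ, if_true]

theorem OrthogonalIdempotents.tmul {e : I → B} {e' : J → C} (he : OrthogonalIdempotents e)
    (he' : OrthogonalIdempotents e') :
    OrthogonalIdempotents fun x : I × J ↦ e x.1 ⊗ₜ[k] e' x.2 := by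
  classical
  rw [OrthogonalIdempotents.iff_mul_eq]
  rintro ⟨i, j⟩ ⟨i', j'⟩
  rw [Algebra.TensorProduct.tmul_mul_tmul, he.mul_eq, he'.mul_eq]
  by_cases hi : i = i' <;> by_cases hj : j = j' <;> simp [hi, hj]

theorem OrthogonalIdempotents.sum_sum_smul_tmul_mul [Fintype I] [Fintype J] {e : I → B}
    {e' : J → C} (he : OrthogonalIdempotents e) (he' : OrthogonalIdempotents e')
    (f g : I → J → k) :
    (∑ i, ∑ j, f i j • (e i ⊗ₜ[k] e' j)) * (∑ i, ∑ j, g i j • (e i ⊗ₜ[k] e' j)) =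
      ∑ i, ∑ j, (f i j * g i j) • (e i ⊗ₜ[k] e' j) := by
  simp_rw [← Fintype.sum_prod_type']
  exact (he.tmul he').sum_smul_mul_sum_smul (fun x ↦ f x.1 x.2) (fun x ↦ g x.1 x.2)

theorem sum_smul_tmul_sum_smul [Fintype I] [Fintype J] (e : I → B) (e' : J → C) (f : I → k)
    (g : J → k) :
    (∑ i, f i • e i) ⊗ₜ[k] (∑ j, g j • e' j) = ∑ i, ∑ j, (f i * g j) • (e i ⊗ₜ[k] e' j) := by
  simp_rw [sum_tmul, tmul_sum, smul_tmul_smul]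

end OrthogonalIdempotents

namespace MonoidAlgebra

variable {k A : Type*} [Field k] [CommRing A] [Fintype A] (ψ : AddChar A k)

def fourierIdempotent (r : A) : MonoidAlgebra k (Multiplicative A) :=
  (Fintype.card A : k)⁻¹ • ∑ a, ψ (-(r * a)) • of k _ (Multiplicative.ofAdd a)

theorem fourierIdempotent_mul_of (r a : A) :
    fourierIdempotent ψ r * of k _ (Multiplicative.ofAdd a) =
      ψ (r * a) • fourierIdempotent ψ r := by
  rw [fourierIdempotent, smul_mul_assoc, smul_comm (ψ _)]
  congr 1
  rw [Finset.sum_mul, Finset.smul_sum]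
  apply Fintype.sum_equiv (Equiv.addRight a)
  intro b
  rw [smul_mul_assoc, ← map_mul, smul_smul, ← AddChar.map_add_eq_mul, Equiv.coe_addRight,
    ← ofAdd_add]
  congr 2
  ring

variable {ψ} [DecidableEq A]

theorem completeOrthogonalIdempotents_fourierIdempotent (hψ : ψ.IsPrimitive)
    (hA : (Fintype.card A : k) ≠ 0) :
    CompleteOrthogonalIdempotents (fourierIdempotent ψ) := by
  refine ⟨OrthogonalIdempotents.iff_mul_eq.2 fun r t ↦ ?_, ?_⟩
  · have h (a : A) : ψ (-(t * a)) * ψ (r * a) = ψ (a * (r - t)) := by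
      rw [← AddChar.map_add_eq_mul]; ring_nf
    nth_rw 2 [fourierIdempotent]
    simp_rw [mul_smul_comm, Finset.mul_sum, mul_smul_comm, fourierIdempotent_mul_of, smul_smul,
      ← Finset.sum_smul, h, hψ.sum_apply_mul_eq_ite, sub_eq_zero]
    split_ifs <;> simp [hA]
  · have h (a r : A) : ψ (-(r * a)) = ψ (r * -a) := by rw [mul_neg]
    simp_rw [fourierIdempotent, ← Finset.smul_sum]
    rw [Finset.sum_comm]
    simp_rw [← Finset.sum_smul, h, hψ.sum_apply_mul_eq_ite, neg_eq_zero, ite_smul, zero_smul,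
      Finset.sum_ite_eq', Finset.mem_univ, if_true, smul_smul, inv_mul_cancel₀ hA, one_smul,
      ofAdd_zero, map_one]

theorem of_eq_sum_smul_fourierIdempotent (hψ : ψ.IsPrimitive) (hA : (Fintype.card A : k) ≠ 0)
    (a : A) : of k _ (Multiplicative.ofAdd a) = ∑ r, ψ (r * a) • fourierIdempotent ψ r := by
  rw [← one_mul (of k _ _), ← (completeOrthogonalIdempotents_fourierIdempotent hψ hA).complete,
    Finset.sum_mul]
  simp_rw [fourierIdempotent_mul_of]

variable (Δ : MonoidAlgebra k (Multiplicative A) →ₐ[k]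
    MonoidAlgebra k (Multiplicative A) ⊗[k] MonoidAlgebra k (Multiplicative A))

theorem comul_fourierIdempotent (hψ : ψ.IsPrimitive) (hA : (Fintype.card A : k) ≠ 0)
    (hΔ : ∀ a, Δ (of k _ a) = of k _ a ⊗ₜ[k] of k _ a) (t : A) :
    Δ (fourierIdempotent ψ t) = ∑ r, ∑ s,
      if r + s = t then fourierIdempotent ψ r ⊗ₜ[k] fourierIdempotent ψ s else 0 := by
  have coeff (r s : A) :
      (Fintype.card A : k)⁻¹ * ∑ a, ψ (-(t * a)) * (ψ (r * a) * ψ (s * a)) =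
        if r + s = t then 1 else 0 := by
    have h (a : A) : ψ (-(t * a)) * (ψ (r * a) * ψ (s * a)) = ψ (a * (r + s - t)) := by
      rw [← AddChar.map_add_eq_mul, ← AddChar.map_add_eq_mul]; ring_nf
    simp_rw [h, hψ.sum_apply_mul_eq_ite, sub_eq_zero]
    split_ifs <;> simp [hA]
  rw [fourierIdempotent, map_smul, map_sum]
  simp_rw [map_smul, hΔ, of_eq_sum_smul_fourierIdempotent hψ hA, sum_smul_tmul_sum_smul,
    Finset.smul_sum, smul_smul]
  rw [Finset.sum_comm]
  refine Finset.sum_congr rfl fun r _ ↦ ?_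
  rw [Finset.sum_comm]
  refine Finset.sum_congr rfl fun s _ ↦ ?_
  rw [← Finset.sum_smul, ← Finset.mul_sum, coeff, ite_smul, one_smul, zero_smul]

theorem comul_sum_smul_fourierIdempotent (hψ : ψ.IsPrimitive) (hA : (Fintype.card A : k) ≠ 0)
    (hΔ : ∀ a, Δ (of k _ a) = of k _ a ⊗ₜ[k] of k _ a) (c : A → k) :
    Δ (∑ t, c t • fourierIdempotent ψ t) =
      ∑ r, ∑ s, c (r + s) • (fourierIdempotent ψ r ⊗ₜ[k] fourierIdempotent ψ s) := by
  simp_rw [map_sum, map_smul, comul_fourierIdempotent Δ hψ hA hΔ, Finset.smul_sum, smul_ite,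
    smul_zero]
  rw [Finset.sum_comm]
  refine Finset.sum_congr rfl fun r _ ↦ ?_
  rw [Finset.sum_comm]
  refine Finset.sum_congr rfl fun s _ ↦ ?_
  rw [Finset.sum_ite_eq, if_pos (Finset.mem_univ _)]

theorem sum_smul_fourierIdempotent_mul_eq_one (hψ : ψ.IsPrimitive)
    (hA : (Fintype.card A : k) ≠ 0) {c d : A → k} (hcd : ∀ r, c r * d r = 1) :
    (∑ r, c r • fourierIdempotent ψ r) * (∑ r, d r • fourierIdempotent ψ r) = 1 := by
  have he := completeOrthogonalIdempotents_fourierIdempotent hψ hA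
  simp_rw [he.sum_smul_mul_sum_smul, hcd, one_smul, he.complete]

theorem ribbon_identity (hψ : ψ.IsPrimitive) (hA : (Fintype.card A : k) ≠ 0)
    (hΔ : ∀ a, Δ (of k _ a) = of k _ a ⊗ₜ[k] of k _ a) :
    (∑ r, ∑ s, ψ (r * s) • (fourierIdempotent ψ r ⊗ₜ[k] fourierIdempotent ψ s)) *
        (∑ r, ∑ s, ψ (r * s) • (fourierIdempotent ψ r ⊗ₜ[k] fourierIdempotent ψ s)) =
      ((∑ r, ψ (-(r * r)) • fourierIdempotent ψ r) ⊗ₜ[k]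
          (∑ r, ψ (-(r * r)) • fourierIdempotent ψ r)) *
        Δ (∑ r, ψ (r * r) • fourierIdempotent ψ r) := by
  have he := (completeOrthogonalIdempotents_fourierIdempotent hψ hA).toOrthogonalIdempotents
  rw [comul_sum_smul_fourierIdempotent Δ hψ hA hΔ, sum_smul_tmul_sum_smul,
    he.sum_sum_smul_tmul_mul he, he.sum_sum_smul_tmul_mul he]
  refine Finset.sum_congr rfl fun r _ ↦ Finset.sum_congr rfl fun s _ ↦ ?_
  simp_rw [← AddChar.map_add_eq_mul]
  ring_nf

end MonoidAlgebra

open MonoidAlgebra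

section Gp

variable (p : ℕ) [NeZero p]

theorem qp_pow (n : ℕ) : qp p ^ n = ZMod.stdAddChar (n : ZMod p) := by
  rw [qp, ← Complex.exp_nat_mul, ← Int.cast_natCast (R := ZMod p), ZMod.stdAddChar_coe]
  congr 1
  push_cast
  ring

omit [NeZero p] in
theorem gp_pow (n : ℕ) : gp p ^ n = of ℂ _ (Multiplicative.ofAdd (n : ZMod p)) := by
  rw [gp, ← map_pow, ← ofAdd_nsmul, nsmul_one]

theorem Pp_eq_fourierIdempotent (r : ℕ) :
    Pp p r = fourierIdempotent ZMod.stdAddChar (r : ZMod p) := by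
  rw [Pp, fourierIdempotent, ZMod.card, ← ZMod.sum_range_natCast p]
  simp_rw [qp_pow, gp_pow, ← AddChar.map_neg_eq_inv, Nat.cast_mul]

theorem Rp_eq_sum_fourierIdempotent :
    Rp p = ∑ r : ZMod p, ∑ s : ZMod p, ZMod.stdAddChar (r * s) •
      (fourierIdempotent ZMod.stdAddChar r ⊗ₜ[ℂ] fourierIdempotent ZMod.stdAddChar s) := by
  simp_rw [Rp, Pp_eq_fourierIdempotent, qp_pow, Nat.cast_mul, ← ZMod.sum_range_natCast p]

theorem vp_eq_sum_fourierIdempotent :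
    vp p = ∑ r : ZMod p, ZMod.stdAddChar (-(r * r)) • fourierIdempotent ZMod.stdAddChar r := by
  simp_rw [vp, Pp_eq_fourierIdempotent, qp_pow, ← AddChar.map_neg_eq_inv, Nat.cast_mul,
    ← ZMod.sum_range_natCast p]

theorem map_of_eq_of_tmul_of (Δ : Gp p →ₐ[ℂ] Gp p ⊗[ℂ] Gp p)
    (hΔ : Δ (gp p) = gp p ⊗ₜ[ℂ] gp p) (a : Multiplicative (ZMod p)) :
    Δ (of ℂ _ a) = of ℂ _ a ⊗ₜ[ℂ] of ℂ _ a := by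
  obtain ⟨n, rfl⟩ : ∃ n : ℕ, Multiplicative.ofAdd (n : ZMod p) = a :=
    ⟨(Multiplicative.toAdd a).val, by simp⟩
  rw [← gp_pow, map_pow, hΔ, Algebra.TensorProduct.tmul_pow]

end Gp

theorem comm_Rp (p : ℕ) : Algebra.TensorProduct.comm ℂ (Gp p) (Gp p) (Rp p) = Rp p := by
  simp only [Rp, map_sum, map_smul, Algebra.TensorProduct.comm_tmul]
  rw [Finset.sum_comm]
  simp_rw [Nat.mul_comm]

/-- For `G = ℂ[ℤ/p]`, the element `v = ∑ q^{-r²} P^r` is invertible and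
central, `R' = σ(R) = R`, and the ribbon identity
`R'R = (v ⊗ v) Δ(v^{-1})` holds. -/
theorem stmt6 (p : ℕ) (hp : 0 < p)
    (Δ : Gp p →ₐ[ℂ] Gp p ⊗[ℂ] Gp p)
    (hΔ : Δ (gp p) = gp p ⊗ₜ[ℂ] gp p) :
    (Algebra.TensorProduct.comm ℂ (Gp p) (Gp p)) (Rp p) = Rp p ∧
    (∀ x : Gp p, vp p * x = x * vp p) ∧
    ∃ vinv : Gp p, vp p * vinv = 1 ∧ vinv * vp p = 1 ∧
      Rp p * Rp p = (vp p ⊗ₜ[ℂ] vp p) * Δ vinv := by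
  have : NeZero p := ⟨hp.ne'⟩
  have hψ := ZMod.isPrimitive_stdAddChar p
  have hA : (Fintype.card (ZMod p) : ℂ) ≠ 0 := by simp [NeZero.ne p]
  have hvw : vp p * ∑ r, ZMod.stdAddChar (r * r) • fourierIdempotent ZMod.stdAddChar r = 1 := by
    rw [vp_eq_sum_fourierIdempotent]
    exact sum_smul_fourierIdempotent_mul_eq_one hψ hA fun r ↦ by
      rw [← AddChar.map_add_eq_mul, neg_add_cancel, AddChar.map_zero_eq_one]
  refine ⟨comm_Rp p, fun x ↦ mul_comm _ _, _, hvw, (mul_comm _ _).trans hvw, ?_⟩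
  rw [Rp_eq_sum_fourierIdempotent, vp_eq_sum_fourierIdempotent]
  exact ribbon_identity Δ hψ hA (map_of_eq_of_tmul_of p Δ hΔ)
end
end

section
/- Let (G, R) be a quasitriangular bialgebra and define a new product ∗ on the dual space G' by (π₁ ∗ π₂)(x) = (π₁ ⊗ π₂)(R Δ(x)). Then ∗ is associative, i.e. (π₁ ∗ π₂) ∗ π₃ = π₁ ∗ (π₂ ∗ π₃) for all π₁, π₂, π₃ ∈ G'. -/
/-!
The product `∗` is the transpose of the twisted coproduct `Δ_R x = R Δ(x)`, and the transpose of a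
coassociative map is associative. Pushing `R₁₂` through `(Δ ⊗ id)` and `R₂₃` through `(id ⊗ Δ)`
with the quasitriangularity axioms turns coassociativity of `Δ_R` into coassociativity of `Δ`
together with the Yang–Baxter equation `R₁₂R₁₃R₂₃ = R₂₃R₁₃R₁₂`; the latter is `R Δ = Δ' R`
applied in the first two legs to `(Δ ⊗ id)(R) = R₁₃R₂₃`.
-/

open TensorProduct

noncomputable section

variable (G : Type*) [Ring G] [Algebra ℂ G]

/-- Embedding of `G ⊗ G` in legs 1,2 of `(G ⊗ G) ⊗ G`. -/
noncomputable def leg12 : (G ⊗[ℂ] G) →ₐ[ℂ] (G ⊗[ℂ] G) ⊗[ℂ] G :=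
  Algebra.TensorProduct.includeLeft

/-- Embedding of `G ⊗ G` in legs 1,3 of `(G ⊗ G) ⊗ G`. -/
noncomputable def leg13 : (G ⊗[ℂ] G) →ₐ[ℂ] (G ⊗[ℂ] G) ⊗[ℂ] G :=
  Algebra.TensorProduct.map
    (Algebra.TensorProduct.includeLeft : G →ₐ[ℂ] G ⊗[ℂ] G) (AlgHom.id ℂ G)

/-- Embedding of `G ⊗ G` in legs 2,3 of `(G ⊗ G) ⊗ G`. -/
noncomputable def leg23 : (G ⊗[ℂ] G) →ₐ[ℂ] (G ⊗[ℂ] G) ⊗[ℂ] G :=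
  Algebra.TensorProduct.map
    (Algebra.TensorProduct.includeRight : G →ₐ[ℂ] G ⊗[ℂ] G) (AlgHom.id ℂ G)

/-- Embedding of `G ⊗ G` in legs 1,2 of `G ⊗ (G ⊗ G)`. -/
noncomputable def leg12' : (G ⊗[ℂ] G) →ₐ[ℂ] G ⊗[ℂ] (G ⊗[ℂ] G) :=
  Algebra.TensorProduct.map (AlgHom.id ℂ G)
    (Algebra.TensorProduct.includeLeft : G →ₐ[ℂ] G ⊗[ℂ] G)

/-- Embedding of `G ⊗ G` in legs 1,3 of `G ⊗ (G ⊗ G)`. -/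
noncomputable def leg13' : (G ⊗[ℂ] G) →ₐ[ℂ] G ⊗[ℂ] (G ⊗[ℂ] G) :=
  Algebra.TensorProduct.map (AlgHom.id ℂ G)
    (Algebra.TensorProduct.includeRight : G →ₐ[ℂ] G ⊗[ℂ] G)


variable {G}

/-- The twisted convolution product on the dual: 
`(π₁ ∗ π₂)(x) = (π₁ ⊗ π₂)(R Δ(x))`. -/
noncomputable def convStar (Δ : G →ₐ[ℂ] G ⊗[ℂ] G) (R : G ⊗[ℂ] G)
    (π₁ π₂ : G →ₗ[ℂ] ℂ) : G →ₗ[ℂ] ℂ :=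
  (TensorProduct.lid ℂ ℂ).toLinearMap
    ∘ₗ TensorProduct.map π₁ π₂
    ∘ₗ LinearMap.mulLeft ℂ R
    ∘ₗ Δ.toLinearMap

section DualMul

variable {K M : Type*} [CommSemiring K] [AddCommMonoid M] [Module K M]

def dualMul (δ : M →ₗ[K] M ⊗[K] M) (f g : M →ₗ[K] K) : M →ₗ[K] K :=
  (TensorProduct.lid K K).toLinearMap ∘ₗ map f g ∘ₗ δ

lemma lid_comp_map_lid_comp_map (f g h : M →ₗ[K] K) :
    (TensorProduct.lid K K).toLinearMap ∘ₗ map ((TensorProduct.lid K K).toLinearMap ∘ₗ map f g) h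
      = (TensorProduct.lid K K).toLinearMap ∘ₗ map f ((TensorProduct.lid K K).toLinearMap ∘ₗ map g h)
        ∘ₗ (TensorProduct.assoc K M M M).toLinearMap := by
  ext; simp [mul_assoc]

theorem dualMul_assoc (δ : M →ₗ[K] M ⊗[K] M)
    (hδ : (TensorProduct.assoc K M M M).toLinearMap ∘ₗ δ.rTensor M ∘ₗ δ = δ.lTensor M ∘ₗ δ)
    (f g h : M →ₗ[K] K) :
    dualMul δ (dualMul δ f g) h = dualMul δ f (dualMul δ g h) := by
  calc dualMul δ (dualMul δ f g) h
      = (TensorProduct.lid K K).toLinearMap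
          ∘ₗ map ((TensorProduct.lid K K).toLinearMap ∘ₗ map f g) h ∘ₗ δ.rTensor M ∘ₗ δ := by
        rw [← LinearMap.comp_assoc δ, LinearMap.map_comp_rTensor]; rfl
    _ = (TensorProduct.lid K K).toLinearMap
          ∘ₗ map f ((TensorProduct.lid K K).toLinearMap ∘ₗ map g h) ∘ₗ δ.lTensor M ∘ₗ δ := by
        rw [← hδ]; simp only [← LinearMap.comp_assoc, lid_comp_map_lid_comp_map]
    _ = dualMul δ f (dualMul δ g h) := by
        rw [← LinearMap.comp_assoc δ, LinearMap.map_comp_lTensor]; rfl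

end DualMul

noncomputable def leg23' : (G ⊗[ℂ] G) →ₐ[ℂ] G ⊗[ℂ] (G ⊗[ℂ] G) :=
  Algebra.TensorProduct.includeRight

noncomputable def swap12 : (G ⊗[ℂ] G) ⊗[ℂ] G →ₐ[ℂ] (G ⊗[ℂ] G) ⊗[ℂ] G :=
  Algebra.TensorProduct.map (Algebra.TensorProduct.comm ℂ G G).toAlgHom (AlgHom.id ℂ G)

lemma assoc_leg12 (z : G ⊗[ℂ] G) :
    Algebra.TensorProduct.assoc ℂ ℂ ℂ G G G (leg12 G z) = leg12' G z := by
  suffices h : (Algebra.TensorProduct.assoc ℂ ℂ ℂ G G G).toAlgHom.comp (leg12 G) = leg12' G from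
    DFunLike.congr_fun h z
  ext <;> simp [leg12, leg12', Algebra.TensorProduct.one_def]

lemma assoc_leg13 (z : G ⊗[ℂ] G) :
    Algebra.TensorProduct.assoc ℂ ℂ ℂ G G G (leg13 G z) = leg13' G z := by
  suffices h : (Algebra.TensorProduct.assoc ℂ ℂ ℂ G G G).toAlgHom.comp (leg13 G) = leg13' G from
    DFunLike.congr_fun h z
  ext <;> simp [leg13, leg13', Algebra.TensorProduct.one_def]

lemma assoc_leg23 (z : G ⊗[ℂ] G) :
    Algebra.TensorProduct.assoc ℂ ℂ ℂ G G G (leg23 G z) = leg23' z := by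
  suffices h : (Algebra.TensorProduct.assoc ℂ ℂ ℂ G G G).toAlgHom.comp (leg23 G) = leg23' from
    DFunLike.congr_fun h z
  ext <;> simp [leg23, leg23']

lemma swap12_leg13 (z : G ⊗[ℂ] G) : swap12 (leg13 G z) = leg23 G z := by
  suffices h : swap12.comp (leg13 G) = leg23 G from DFunLike.congr_fun h z
  ext <;> simp [swap12, leg13, leg23, Algebra.TensorProduct.one_def]

lemma swap12_leg23 (z : G ⊗[ℂ] G) : swap12 (leg23 G z) = leg13 G z := by
  suffices h : swap12.comp (leg23 G) = leg13 G from DFunLike.congr_fun h z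
  ext <;> simp [swap12, leg13, leg23, Algebra.TensorProduct.one_def]

section Quasitriangular

variable (Δ : G →ₐ[ℂ] G ⊗[ℂ] G) (R : G ⊗[ℂ] G)

def twistedComul : G →ₗ[ℂ] G ⊗[ℂ] G :=
  LinearMap.mulLeft ℂ R ∘ₗ Δ.toLinearMap

lemma twistedComul_apply (x : G) : twistedComul Δ R x = R * Δ x := rfl

lemma convStar_eq_dualMul : convStar Δ R = dualMul (twistedComul Δ R) := rfl

lemma rTensor_twistedComul (y : G ⊗[ℂ] G) :
    (twistedComul Δ R).rTensor G y
      = leg12 G R * Algebra.TensorProduct.map Δ (AlgHom.id ℂ G) y := by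
  induction y using TensorProduct.induction_on with
  | zero => simp
  | tmul a b => simp [twistedComul_apply, leg12]
  | add y y' hy hy' => simp only [map_add, mul_add, hy, hy']

lemma lTensor_twistedComul (y : G ⊗[ℂ] G) :
    (twistedComul Δ R).lTensor G y
      = leg23' R * Algebra.TensorProduct.map (AlgHom.id ℂ G) Δ y := by
  induction y using TensorProduct.induction_on with
  | zero => simp
  | tmul a b => simp [twistedComul_apply, leg23']
  | add y y' hy hy' => simp only [map_add, mul_add, hy, hy']

variable {Δ R}

lemma leg12_mul_map_comul (hqt3 : ∀ x : G, R * Δ x = (Algebra.TensorProduct.comm ℂ G G) (Δ x) * R)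
    (z : G ⊗[ℂ] G) :
    leg12 G R * Algebra.TensorProduct.map Δ (AlgHom.id ℂ G) z
      = swap12 (Algebra.TensorProduct.map Δ (AlgHom.id ℂ G) z) * leg12 G R := by
  induction z using TensorProduct.induction_on with
  | zero => simp
  | tmul a b => simp [leg12, swap12, hqt3 a]
  | add y y' hy hy' => simp only [map_add, mul_add, add_mul, hy, hy']

theorem yang_baxter
    (hqt1 : (Algebra.TensorProduct.map Δ (AlgHom.id ℂ G)) R = leg13 G R * leg23 G R)
    (hqt3 : ∀ x : G, R * Δ x = (Algebra.TensorProduct.comm ℂ G G) (Δ x) * R) :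
    leg12 G R * leg13 G R * leg23 G R = leg23 G R * leg13 G R * leg12 G R := by
  simpa only [hqt1, map_mul, swap12_leg13, swap12_leg23, mul_assoc]
    using leg12_mul_map_comul hqt3 R

theorem twistedComul_coassoc
    (hcoassoc : ∀ x : G,
      (Algebra.TensorProduct.assoc ℂ ℂ ℂ G G G)
          ((Algebra.TensorProduct.map Δ (AlgHom.id ℂ G)) (Δ x))
        = (Algebra.TensorProduct.map (AlgHom.id ℂ G) Δ) (Δ x))
    (hqt1 : (Algebra.TensorProduct.map Δ (AlgHom.id ℂ G)) R = leg13 G R * leg23 G R)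
    (hqt2 : (Algebra.TensorProduct.map (AlgHom.id ℂ G) Δ) R = leg13' G R * leg12' G R)
    (hqt3 : ∀ x : G, R * Δ x = (Algebra.TensorProduct.comm ℂ G G) (Δ x) * R) :
    (TensorProduct.assoc ℂ G G G).toLinearMap ∘ₗ (twistedComul Δ R).rTensor G ∘ₗ twistedComul Δ R
      = (twistedComul Δ R).lTensor G ∘ₗ twistedComul Δ R := by
  ext x
  simp only [LinearMap.comp_apply, rTensor_twistedComul, lTensor_twistedComul, twistedComul_apply]
  -- the linear associator is definitionally the algebra one, which is multiplicative
  change Algebra.TensorProduct.assoc ℂ ℂ ℂ G G G _ = _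
  have hleft : leg12 G R * Algebra.TensorProduct.map Δ (AlgHom.id ℂ G) (R * Δ x)
      = leg23 G R * leg13 G R * leg12 G R * Algebra.TensorProduct.map Δ (AlgHom.id ℂ G) (Δ x) := by
    rw [map_mul, hqt1, ← mul_assoc, ← mul_assoc, yang_baxter hqt1 hqt3]
  have hright : leg23' R * Algebra.TensorProduct.map (AlgHom.id ℂ G) Δ (R * Δ x)
      = leg23' R * leg13' G R * leg12' G R * Algebra.TensorProduct.map (AlgHom.id ℂ G) Δ (Δ x) := by
    rw [map_mul, hqt2, ← mul_assoc, ← mul_assoc]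
  rw [hleft, hright]
  simp only [map_mul, assoc_leg12, assoc_leg13, assoc_leg23, hcoassoc]

end Quasitriangular

theorem stmt17_general (Δ : G →ₐ[ℂ] G ⊗[ℂ] G) (R : G ⊗[ℂ] G)
    -- coassociativity of Δ
    (hcoassoc : ∀ x : G,
      (Algebra.TensorProduct.assoc ℂ ℂ ℂ G G G)
          ((Algebra.TensorProduct.map Δ (AlgHom.id ℂ G)) (Δ x))
        = (Algebra.TensorProduct.map (AlgHom.id ℂ G) Δ) (Δ x))
    -- quasitriangularity
    (hqt1 : (Algebra.TensorProduct.map Δ (AlgHom.id ℂ G)) R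
              = leg13 G R * leg23 G R)
    (hqt2 : (Algebra.TensorProduct.map (AlgHom.id ℂ G) Δ) R
              = leg13' G R * leg12' G R)
    (hqt3 : ∀ x : G, R * Δ x = (Algebra.TensorProduct.comm ℂ G G) (Δ x) * R) :
    ∀ π₁ π₂ π₃ : G →ₗ[ℂ] ℂ,
      convStar Δ R (convStar Δ R π₁ π₂) π₃
        = convStar Δ R π₁ (convStar Δ R π₂ π₃) := by
  rw [convStar_eq_dualMul]
  exact dualMul_assoc _ (twistedComul_coassoc hcoassoc hqt1 hqt2 hqt3)

/-- For a quasitriangular bialgebra `(G, Δ, R)`, the twisted product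
`(π₁ ∗ π₂)(x) = (π₁ ⊗ π₂)(R Δ(x))` on the dual `G'` is associative. -/
theorem stmt17 (Δ : G →ₐ[ℂ] G ⊗[ℂ] G) (R Rinv : G ⊗[ℂ] G)
    (hinv : R * Rinv = 1) (hinv' : Rinv * R = 1)
    -- coassociativity of Δ
    (hcoassoc : ∀ x : G,
      (Algebra.TensorProduct.assoc ℂ ℂ ℂ G G G)
          ((Algebra.TensorProduct.map Δ (AlgHom.id ℂ G)) (Δ x))
        = (Algebra.TensorProduct.map (AlgHom.id ℂ G) Δ) (Δ x))
    -- quasitriangularity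
    (hqt1 : (Algebra.TensorProduct.map Δ (AlgHom.id ℂ G)) R
              = leg13 G R * leg23 G R)
    (hqt2 : (Algebra.TensorProduct.map (AlgHom.id ℂ G) Δ) R
              = leg13' G R * leg12' G R)
    (hqt3 : ∀ x : G, R * Δ x = (Algebra.TensorProduct.comm ℂ G G) (Δ x) * R) :
    ∀ π₁ π₂ π₃ : G →ₗ[ℂ] ℂ,
      convStar Δ R (convStar Δ R π₁ π₂) π₃
        = convStar Δ R π₁ (convStar Δ R π₂ π₃) :=
  stmt17_general Δ R hcoassoc hqt1 hqt2 hqt3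
end
end
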